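/- Let T, U be closed subspaces of H with cos(φ_{T,U}) > 0, (u_j) a frame for U with synthesis operator U and frame operator S = UU*, and (t_k) a frame for T with synthesis operator T. Then the operator R = T (U*T)† U* is an idempotent with range T and null space S(T)^⊥, i.e., R is the oblique projection P_{T, S(T)^⊥}. -/

import Mathlib

/-!
The lower frame bound makes the frame operator `T T*` coercive on `T`, so the synthesis operator
`T` maps `ℓ²` onto `T`; the lower frame bound of `(u_j)` together with `cos φ_{T,U} > 0` makes
`U*` injective on `T`. Write `M = U*T`. The Penrose identity `M†MM† = M†` gives `R² = R`, and
`MM†M = M` with the injectivity gives `R (T c) = T c`, so `R` has range `T`. Finally `MM†` is the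
orthogonal projection onto the range of `M`, so `R f = 0` iff `U*f ⊥ U*T(ℓ²)`, i.e. iff
`f ⊥ UU*(T) = S(T)`.
-/

noncomputable section
open scoped InnerProductSpace ENNReal

/-- The sequence space ℓ²(ℕ). -/
abbrev Lp2 : Type := lp (fun _ : ℕ => ℂ) 2

/-- `u` is a frame for the subspace `U` with frame bounds `A` and `B`:
`A‖f‖² ≤ Σ_j |⟨f,u_j⟩|² ≤ B‖f‖²` for all `f ∈ U`, and all `u_j ∈ U`. -/
def IsFrameFor {H : Type} [NormedAddCommGroup H] [InnerProductSpace ℂ H]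
    (u : ℕ → H) (U : Submodule ℂ H) (A B : ℝ) : Prop :=
  (∀ j, u j ∈ U) ∧
    ∀ f ∈ U, A * ‖f‖ ^ 2 ≤ ∑' j, ‖⟪u j, f⟫_ℂ‖ ^ 2 ∧
      ∑' j, ‖⟪u j, f⟫_ℂ‖ ^ 2 ≤ B * ‖f‖ ^ 2

/-- `cos(φ_{T,U}) = inf_{g ∈ T, ‖g‖=1} ‖P_U g‖` (orthogonal-projection form). -/
def cosAngleP {H : Type} [NormedAddCommGroup H] [InnerProductSpace ℂ H]
    [CompleteSpace H] (T U : Submodule ℂ H) [CompleteSpace U] : ℝ :=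
  sInf {r : ℝ | ∃ g ∈ T, ‖g‖ = 1 ∧ r = ‖(U.orthogonalProjectionOnto g : H)‖}

/-- `cos(φ_{T,Y}) = inf_{g ∈ T, ‖g‖=1} sup_{v ∈ Y, ‖v‖=1} |⟨g,v⟩|` (inner-product form,
for a general subset `Y`). -/
def cosAngleS {H : Type} [NormedAddCommGroup H] [InnerProductSpace ℂ H]
    (T : Submodule ℂ H) (Y : Set H) : ℝ :=
  sInf {r : ℝ | ∃ g ∈ T, ‖g‖ = 1 ∧
    r = sSup {s : ℝ | ∃ v ∈ Y, ‖v‖ = 1 ∧ s = ‖⟪g, v⟫_ℂ‖}}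

/-- `D` is the Moore–Penrose pseudoinverse of `A` (the four Penrose conditions,
with self-adjointness expressed via inner products). -/
def IsMoorePenrose {E F : Type} [NormedAddCommGroup E] [InnerProductSpace ℂ E]
    [NormedAddCommGroup F] [InnerProductSpace ℂ F]
    (A : E →L[ℂ] F) (D : F →L[ℂ] E) : Prop :=
  A.comp (D.comp A) = A ∧ D.comp (A.comp D) = D ∧
    (∀ x y : F, ⟪A (D x), y⟫_ℂ = ⟪x, A (D y)⟫_ℂ) ∧
    (∀ x y : E, ⟪D (A x), y⟫_ℂ = ⟪x, D (A y)⟫_ℂ)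

open ContinuousLinearMap

theorem lp2_hasSum_smul_single (c : Lp2) : HasSum (fun i => c i • lp.single 2 i (1 : ℂ)) c := by
  simpa [← lp.single_smul] using lp.hasSum_single (E := fun _ : ℕ => ℂ) (by norm_num) c

theorem lp2_inner_single_left (k : ℕ) (c : Lp2) : ⟪lp.single 2 k (1 : ℂ), c⟫_ℂ = c k := by
  simp [lp.inner_single_left]

section Synthesis

variable {H : Type} [NormedAddCommGroup H] [InnerProductSpace ℂ H]
  {V : Lp2 →L[ℂ] H} {t : ℕ → H}

theorem range_le_of_apply_single_mem {K : Submodule ℂ H} (hK : IsClosed (K : Set H))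
    (hV : ∀ k, V (lp.single 2 k 1) = t k) (ht : ∀ k, t k ∈ K) :
    LinearMap.range (V : Lp2 →ₗ[ℂ] H) ≤ K := by
  rintro _ ⟨c, rfl⟩
  have hsum : HasSum (fun i => c i • t i) (V c) := by
    simpa [hV] using (lp2_hasSum_smul_single c).mapL V
  show V c ∈ K
  rw [← hsum.tsum_eq]
  exact tsum_mem hK fun i => K.smul_mem _ (ht i)

variable [CompleteSpace H]

theorem adjoint_apply_of_apply_single (hV : ∀ k, V (lp.single 2 k 1) = t k) (f : H) (k : ℕ) :
    adjoint V f k = ⟪t k, f⟫_ℂ := by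
  rw [← lp2_inner_single_left, adjoint_inner_right, hV]

theorem norm_adjoint_sq_of_apply_single (hV : ∀ k, V (lp.single 2 k 1) = t k) (f : H) :
    ‖adjoint V f‖ ^ 2 = ∑' k, ‖⟪t k, f⟫_ℂ‖ ^ 2 := by
  have h := lp.norm_rpow_eq_tsum (p := 2) (by norm_num) (adjoint V f)
  simp only [ENNReal.toReal_ofNat, adjoint_apply_of_apply_single hV] at h
  exact_mod_cast h

theorem eq_adjoint_of_apply_single {W : H →L[ℂ] Lp2} (hV : ∀ k, V (lp.single 2 k 1) = t k)
    (hW : ∀ f k, W f k = ⟪t k, f⟫_ℂ) : V = adjoint W := by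
  rw [← adjoint_adjoint V]
  congr 1
  ext f k
  rw [adjoint_apply_of_apply_single hV, hW]

end Synthesis

namespace IsMoorePenrose

variable {E F G : Type} [NormedAddCommGroup E] [InnerProductSpace ℂ E]
  [NormedAddCommGroup F] [NormedSpace ℂ F] [NormedAddCommGroup G] [InnerProductSpace ℂ G]
  {V : E →L[ℂ] F} {W : F →L[ℂ] G} {D : G →L[ℂ] E}

theorem comp_comp_idem (hD : IsMoorePenrose (W.comp V) D) :
    (V.comp (D.comp W)).comp (V.comp (D.comp W)) = V.comp (D.comp W) := by
  ext f
  simpa using congr(V ($(hD.2.1) (W f)))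

theorem apply_apply_apply_self (hD : IsMoorePenrose (W.comp V) D)
    (hinj : ∀ c, W (V c) = 0 → V c = 0) (c : E) : V (D (W (V c))) = V c := by
  rw [← sub_eq_zero, ← map_sub]
  refine hinj _ ?_
  simpa [sub_eq_zero] using congr($(hD.1) c)

theorem range_comp_comp (hD : IsMoorePenrose (W.comp V) D)
    (hinj : ∀ c, W (V c) = 0 → V c = 0) :
    LinearMap.range (V.comp (D.comp W) : F →ₗ[ℂ] F) = LinearMap.range (V : E →ₗ[ℂ] F) := by
  apply le_antisymm
  · rintro _ ⟨f, rfl⟩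
    exact ⟨D (W f), rfl⟩
  · rintro _ ⟨c, rfl⟩
    exact ⟨V c, apply_apply_apply_self hD hinj c⟩

theorem apply_apply_apply_eq_zero_iff (hD : IsMoorePenrose (W.comp V) D)
    (hinj : ∀ c, W (V c) = 0 → V c = 0) (f : F) :
    V (D (W f)) = 0 ↔ ∀ c, ⟪W (V c), W f⟫_ℂ = 0 := by
  obtain ⟨hMDM, -, hMD, -⟩ := hD
  have hMD' (x y : G) : ⟪W (V (D x)), y⟫_ℂ = ⟪x, W (V (D y))⟫_ℂ := by simpa using hMD x y
  constructor
  · intro h0 c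
    rw [← show W (V (D (W (V c)))) = W (V c) by simpa using congr($hMDM c), hMD', h0,
      map_zero, inner_zero_right]
  · intro hperp
    refine hinj _ ((inner_self_eq_zero (𝕜 := ℂ)).mp ?_)
    calc ⟪W (V (D (W f))), W (V (D (W f)))⟫_ℂ = ⟪W f, W (V (D (W (V (D (W f))))))⟫_ℂ := hMD' _ _
      _ = ⟪W f, W (V (D (W f)))⟫_ℂ := by
          rw [show W (V (D (W (V (D (W f)))))) = W (V (D (W f))) by
            simpa using congr($hMDM (D (W f)))]
      _ = 0 := by rw [← inner_conj_symm, hperp, map_zero]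

end IsMoorePenrose

theorem ContinuousLinearMap.range_eq_top_of_coercive {𝕜 E : Type*} [RCLike 𝕜]
    [NormedAddCommGroup E] [InnerProductSpace 𝕜 E] [CompleteSpace E] (G : E →L[𝕜] E) {c : ℝ}
    (hc : 0 < c) (hG : ∀ x, c * ‖x‖ ^ 2 ≤ RCLike.re ⟪x, G x⟫_𝕜) :
    LinearMap.range (G : E →ₗ[𝕜] E) = ⊤ := by
  have hbound : ∀ x, ‖x‖ ≤ c⁻¹ * ‖G x‖ := by
    intro x
    rw [le_inv_mul_iff₀ hc]
    rcases (norm_nonneg x).eq_or_lt with hx | hx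
    · rw [← hx, mul_zero]
      positivity
    · refine le_of_mul_le_mul_right ?_ hx
      nlinarith [hG x, re_inner_le_norm (𝕜 := 𝕜) x (G x)]
  have hanti : AntilipschitzWith c⁻¹.toNNReal G :=
    G.antilipschitz_of_bound fun x => by
      rw [Real.coe_toNNReal _ (inv_pos.mpr hc).le]
      exact hbound x
  have hclosed : IsClosed (LinearMap.range (G : E →ₗ[𝕜] E) : Set E) := by
    rw [LinearMap.coe_range]
    exact hanti.isClosed_range G.uniformContinuous
  have := hclosed.completeSpace_coe
  rw [← Submodule.orthogonal_eq_bot_iff, Submodule.eq_bot_iff]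
  intro y hy
  have h0 : ⟪y, G y⟫_𝕜 = 0 := (Submodule.mem_orthogonal' _ y).mp hy _ ⟨y, rfl⟩
  have hy0 : c * ‖y‖ ^ 2 ≤ 0 := by simpa [h0] using hG y
  simpa using nonpos_of_mul_nonpos_right hy0 hc

theorem cosAngleP_mul_norm_le {H : Type} [NormedAddCommGroup H] [InnerProductSpace ℂ H]
    [CompleteSpace H] {T U : Submodule ℂ H} [CompleteSpace U] {g : H} (hg : g ∈ T) :
    cosAngleP T U * ‖g‖ ≤ ‖(U.orthogonalProjectionOnto g : H)‖ := by
  rcases eq_or_ne g 0 with rfl | hg0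
  · simp
  have hbdd : BddBelow {r : ℝ | ∃ g ∈ T, ‖g‖ = 1 ∧ r = ‖(U.orthogonalProjectionOnto g : H)‖} :=
    ⟨0, by rintro r ⟨x, -, -, rfl⟩; exact norm_nonneg _⟩
  have hunit : cosAngleP T U ≤ ‖(U.orthogonalProjectionOnto ((‖g‖⁻¹ : ℂ) • g) : H)‖ :=
    csInf_le hbdd ⟨_, T.smul_mem _ hg, norm_smul_inv_norm hg0, rfl⟩
  rw [map_smul, Submodule.coe_smul, norm_smul, norm_inv, Complex.norm_real, norm_norm,
    le_inv_mul_iff₀ (norm_pos_iff.mpr hg0)] at hunit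
  linarith

namespace IsFrameFor

variable {H : Type} [NormedAddCommGroup H] [InnerProductSpace ℂ H]
  {u : ℕ → H} {U : Submodule ℂ H} {A B : ℝ}

theorem eq_zero_of_forall_inner_eq_zero (hu : IsFrameFor u U A B) (hA : 0 < A) {f : H}
    (hf : f ∈ U) (h0 : ∀ j, ⟪u j, f⟫_ℂ = 0) : f = 0 := by
  have hle : A * ‖f‖ ^ 2 ≤ 0 := by simpa [h0] using (hu.2 f hf).1
  simpa using nonpos_of_mul_nonpos_right hle hA

variable [CompleteSpace H]

theorem eq_zero_of_mem_of_cosAngleP_pos [CompleteSpace U] {T : Submodule ℂ H}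
    (hu : IsFrameFor u U A B) (hA : 0 < A) (hangle : 0 < cosAngleP T U) {g : H} (hg : g ∈ T)
    (h0 : ∀ j, ⟪u j, g⟫_ℂ = 0) : g = 0 := by
  have hproj : (U.orthogonalProjectionOnto g : H) = 0 := by
    refine hu.eq_zero_of_forall_inner_eq_zero hA (Submodule.coe_mem _) fun j => ?_
    rw [← h0 j, ← Submodule.coe_inner U ⟨u j, hu.1 j⟩,
      Submodule.inner_orthogonalProjectionOnto_eq_of_mem_left]
  have hle := cosAngleP_mul_norm_le (U := U) hg
  rw [hproj, norm_zero] at hle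
  simpa using nonpos_of_mul_nonpos_right hle hangle

theorem range_synthesis [CompleteSpace U] (hu : IsFrameFor u U A B) (hA : 0 < A)
    {V : Lp2 →L[ℂ] H} (hV : ∀ k, V (lp.single 2 k 1) = u k) :
    LinearMap.range (V : Lp2 →ₗ[ℂ] H) = U := by
  have hle : LinearMap.range (V : Lp2 →ₗ[ℂ] H) ≤ U :=
    range_le_of_apply_single_mem (completeSpace_coe_iff_isComplete.mp ‹_›).isClosed hV hu.1
  refine le_antisymm hle fun f hf => ?_
  -- the frame operator `V V*`, restricted to `U`, is coercive by the lower frame bound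
  let G : U →L[ℂ] U := (V.comp ((adjoint V).comp U.subtypeL)).codRestrict U
    fun x => hle (LinearMap.mem_range_self _ _)
  have hG : ∀ x : U, A * ‖x‖ ^ 2 ≤ RCLike.re ⟪x, G x⟫_ℂ := fun x => by
    rw [Submodule.coe_inner]
    change A * ‖(x : H)‖ ^ 2 ≤ RCLike.re ⟪(x : H), V (adjoint V x)⟫_ℂ
    rw [← adjoint_inner_left, inner_self_eq_norm_sq, norm_adjoint_sq_of_apply_single hV]
    exact (hu.2 x x.2).1
  obtain ⟨x, hx⟩ : (⟨f, hf⟩ : U) ∈ LinearMap.range (G : U →ₗ[ℂ] U) := by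
    rw [G.range_eq_top_of_coercive hA hG]
    trivial
  exact ⟨adjoint V x, congrArg Subtype.val hx⟩

end IsFrameFor

theorem least_squares_is_oblique_projection_general
    {H : Type} [NormedAddCommGroup H] [InnerProductSpace ℂ H] [CompleteSpace H]
    (T U : Submodule ℂ H) [CompleteSpace T] [CompleteSpace U]
    (hangle : 0 < cosAngleP T U)
    (u : ℕ → H) (A B : ℝ) (hA : 0 < A) (hframe : IsFrameFor u U A B)
    (Usyn : Lp2 →L[ℂ] H) (hUsyn : ∀ j, Usyn (lp.single 2 j 1) = u j)
    (Ustar : H →L[ℂ] Lp2) (hUstar : ∀ f j, Ustar f j = ⟪u j, f⟫_ℂ)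
    (S : H →L[ℂ] H) (hSdef : S = Usyn.comp Ustar)
    (t : ℕ → H) (C D' : ℝ) (hC : 0 < C) (htframe : IsFrameFor t T C D')
    (Tsyn : Lp2 →L[ℂ] H) (hTsyn : ∀ k, Tsyn (lp.single 2 k 1) = t k)
    (Dag : Lp2 →L[ℂ] Lp2) (hDag : IsMoorePenrose (Ustar.comp Tsyn) Dag)
    (R : H →L[ℂ] H) (hR : R = Tsyn.comp (Dag.comp Ustar)) :
    R.comp R = R ∧ LinearMap.range (R : H →ₗ[ℂ] H) = T ∧
      (∀ f : H, R f = 0 ↔ ∀ v ∈ S '' (T : Set H), ⟪v, f⟫_ℂ = 0) := by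
  have hUadj : Usyn = adjoint Ustar := eq_adjoint_of_apply_single hUsyn hUstar
  have hTrange : LinearMap.range (Tsyn : Lp2 →ₗ[ℂ] H) = T := htframe.range_synthesis hC hTsyn
  have hinj : ∀ c, Ustar (Tsyn c) = 0 → Tsyn c = 0 := fun c h0 =>
    hframe.eq_zero_of_mem_of_cosAngleP_pos hA hangle (hTrange ▸ LinearMap.mem_range_self _ c)
      fun j => by rw [← hUstar, h0, lp.coeFn_zero, Pi.zero_apply]
  subst hR hSdef hUadj
  refine ⟨hDag.comp_comp_idem, (hDag.range_comp_comp hinj).trans hTrange, fun f => ?_⟩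
  rw [comp_apply, comp_apply, hDag.apply_apply_apply_eq_zero_iff hinj, ← hTrange]
  simp only [ContinuousLinearMap.coe_coe, LinearMap.coe_range, Set.forall_mem_image,
    Set.forall_mem_range, comp_apply, adjoint_inner_left]

/-- With `cos(φ_{T,U}) > 0`, the operator `R = T (U*T)† U*` is idempotent
with range `T` and null space `S(T)^⊥`, i.e. `R` is the oblique projection
`P_{T,S(T)^⊥}`. -/
theorem least_squares_is_oblique_projection
    {H : Type} [NormedAddCommGroup H] [InnerProductSpace ℂ H] [CompleteSpace H]
    (T U : Submodule ℂ H) [CompleteSpace T] [CompleteSpace U]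
    (hangle : 0 < cosAngleP T U)
    (u : ℕ → H) (A B : ℝ) (hA : 0 < A) (hAB : A ≤ B) (hframe : IsFrameFor u U A B)
    (Usyn : Lp2 →L[ℂ] H) (hUsyn : ∀ j, Usyn (lp.single 2 j 1) = u j)
    (Ustar : H →L[ℂ] Lp2) (hUstar : ∀ f j, Ustar f j = ⟪u j, f⟫_ℂ)
    (S : H →L[ℂ] H) (hSdef : S = Usyn.comp Ustar)
    (t : ℕ → H) (C D' : ℝ) (hC : 0 < C) (hCD : C ≤ D') (htframe : IsFrameFor t T C D')
    (Tsyn : Lp2 →L[ℂ] H) (hTsyn : ∀ k, Tsyn (lp.single 2 k 1) = t k)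
    (Dag : Lp2 →L[ℂ] Lp2) (hDag : IsMoorePenrose (Ustar.comp Tsyn) Dag)
    (R : H →L[ℂ] H) (hR : R = Tsyn.comp (Dag.comp Ustar)) :
    R.comp R = R ∧ LinearMap.range (R : H →ₗ[ℂ] H) = T ∧
      (∀ f : H, R f = 0 ↔ ∀ v ∈ S '' (T : Set H), ⟪v, f⟫_ℂ = 0) :=
  least_squares_is_oblique_projection_general T U hangle u A B hA hframe Usyn hUsyn Ustar hUstar S
    hSdef t C D' hC htframe Tsyn hTsyn Dag hDag R hR
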